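/- Completeness by induction on derivation-tree height: for every path π from u to v in graph G and nonterminal A with A ⇒* ω(π), the Kronecker-product CFPQ algorithm eventually adds the edge (u, A, v) to the graph; i.e., upon termination, M₂^A[u,v] = 1 if and only if there exists a path u π v in G with A ⇒* ω(π). -/
import Mathlib


/-- A path in an edge-labeled directed graph, together with its word of labels. -/
inductive LPath {V L : Type} (E : V → L → V → Prop) : V → List L → V → Prop
  | nil (v : V) : LPath E v [] v
  | cons {u v w : V} {l : L} {ls : List L} :
      E u l v → LPath E v ls w → LPath E u (l :: ls) w

mutual
  /-- `Der A w`: the terminal word `w` is derivable from nonterminal `A` in the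
  grammar represented by the RSM `(δ, q0, fin)`: the box for `A` accepts exactly the
  right-hand sides of `A`'s productions. -/
  inductive Der {Q T Nt : Type} (δ : Q → (T ⊕ Nt) → Q → Prop) (q0 : Nt → Q)
      (fin : Nt → Q → Prop) : Nt → List T → Prop
    | step {A qf α w} : fin A qf → LPath δ (q0 A) α qf → FlatD δ q0 fin α w →
        Der δ q0 fin A w
  /-- `FlatD α w`: `w` is obtained from the word `α` over `Σ ∪ N` by replacing each
  nonterminal by a word derivable from it. -/
  inductive FlatD {Q T Nt : Type} (δ : Q → (T ⊕ Nt) → Q → Prop) (q0 : Nt → Q)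
      (fin : Nt → Q → Prop) : List (T ⊕ Nt) → List T → Prop
    | nil : FlatD δ q0 fin [] []
    | cons_t {t α w} : FlatD δ q0 fin α w → FlatD δ q0 fin (Sum.inl t :: α) (t :: w)
    | cons_n {A α w₁ w} : Der δ q0 fin A w₁ → FlatD δ q0 fin α w →
        FlatD δ q0 fin (Sum.inr A :: α) (w₁ ++ w)
end

/-- Edge relation of the Kronecker product of an RSM transition graph and a graph. -/
def prodE {Q V L : Type} (δ : Q → L → Q → Prop) (E : V → L → V → Prop) :
    Q × V → L → Q × V → Prop :=
  fun p l q => δ p.1 l q.1 ∧ E p.2 l q.2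

/-- The graph over `Σ ∪ N` obtained from the terminal edges `E₀` and the current
nonterminal edges `X`. -/
def extendG {V T Nt : Type} (E₀ : V → T → V → Prop) (X : V → Nt → V → Prop) :
    V → (T ⊕ Nt) → V → Prop :=
  fun u l v => Sum.elim (fun t => E₀ u t v) (fun A => X u A v) l

/-- One iteration of the Kronecker-product CFPQ algorithm: add the edge `(u, A, v)`
whenever the product of the RSM and the current graph has a path from `(q_A⁰, u)` to
some `(q_A^f, v)` with `q_A^f` final (the empty path handles ε-rules). -/
def stepF {Q V T Nt : Type} (δ : Q → (T ⊕ Nt) → Q → Prop) (q0 : Nt → Q)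
    (fin : Nt → Q → Prop) (E₀ : V → T → V → Prop)
    (X : V → Nt → V → Prop) : V → Nt → V → Prop :=
  fun u A v => ∃ (qf : Q) (α : List (T ⊕ Nt)), fin A qf ∧
    LPath (prodE δ (extendG E₀ X)) (q0 A, u) α (qf, v)

section Aux

variable {Q V T Nt : Type}

theorem lpath_append {V L : Type} {E : V → L → V → Prop} {u m v : V} {a b : List L}
    (h1 : LPath E u a m) (h2 : LPath E m b v) : LPath E u (a ++ b) v := by
  induction h1 with
  | nil => simpa using h2
  | cons e _ ih => exact LPath.cons e (ih h2)

theorem lpath_append_inv {V L : Type} {E : V → L → V → Prop} {a : List L} :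
    ∀ {u v : V} {b : List L}, LPath E u (a ++ b) v → ∃ m, LPath E u a m ∧ LPath E m b v := by
  induction a with
  | nil => intro u v b h; exact ⟨u, LPath.nil u, h⟩
  | cons l ls ih =>
    intro u v b h
    cases h with
    | cons e h' =>
      obtain ⟨m, h1, h2⟩ := ih h'
      exact ⟨m, LPath.cons e h1, h2⟩

theorem lpath_mono {V L : Type} {E E' : V → L → V → Prop}
    (hE : ∀ x l y, E x l y → E' x l y) {u v : V} {w : List L}
    (h : LPath E u w v) : LPath E' u w v := by
  induction h with
  | nil => exact LPath.nil _
  | cons e _ ih => exact LPath.cons (hE _ _ _ e) ih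

variable (δ : Q → (T ⊕ Nt) → Q → Prop) (q0 : Nt → Q) (fin : Nt → Q → Prop)
  (E₀ : V → T → V → Prop)

/-- The n-th iterate of the algorithm. -/
def iterX (n : ℕ) : V → Nt → V → Prop :=
  (stepF δ q0 fin E₀)^[n] (fun _ _ _ => False)

theorem stepF_mono {X Y : V → Nt → V → Prop} (hXY : ∀ u A v, X u A v → Y u A v)
    {u : V} {A : Nt} {v : V} (h : stepF δ q0 fin E₀ X u A v) :
    stepF δ q0 fin E₀ Y u A v := by
  obtain ⟨qf, α, hf, hp⟩ := h
  refine ⟨qf, α, hf, lpath_mono ?_ hp⟩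
  rintro ⟨p1, p2⟩ l ⟨r1, r2⟩ ⟨h1, h2⟩
  refine ⟨h1, ?_⟩
  cases l with
  | inl t => exact h2
  | inr A' => exact hXY _ _ _ h2

theorem iterX_mono : ∀ {m n : ℕ}, m ≤ n → ∀ u A v,
    iterX δ q0 fin E₀ m u A v → iterX δ q0 fin E₀ n u A v := by
  have step : ∀ k u A v, iterX δ q0 fin E₀ k u A v → iterX δ q0 fin E₀ (k+1) u A v := by
    intro k
    induction k with
    | zero => intro u A v h; exact h.elim
    | succ k ih =>
      intro u A v h
      rw [iterX, Function.iterate_succ_apply'] at h ⊢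
      exact stepF_mono δ q0 fin E₀ ih h
  intro m n hmn
  induction hmn with
  | refl => intro _ _ _ h; exact h
  | step _ ih => intro u A v h; exact step _ _ _ _ (ih u A v h)

/-- Soundness of one product-path, given soundness of X. -/
theorem prod_sound {X : V → Nt → V → Prop}
    (hX : ∀ u A v, X u A v → ∃ w, LPath E₀ u w v ∧ Der δ q0 fin A w)
    {s t : Q × V} {α : List (T ⊕ Nt)}
    (h : LPath (prodE δ (extendG E₀ X)) s α t) :
    LPath δ s.1 α t.1 ∧ ∃ w, FlatD δ q0 fin α w ∧ LPath E₀ s.2 w t.2 := by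
  induction h with
  | nil => exact ⟨LPath.nil _, [], FlatD.nil, LPath.nil _⟩
  | @cons s m t l ls e _ ih =>
    obtain ⟨e1, e2⟩ := e
    obtain ⟨hδ, w, hfl, hpw⟩ := ih
    refine ⟨LPath.cons e1 hδ, ?_⟩
    cases l with
    | inl t0 => exact ⟨t0 :: w, FlatD.cons_t hfl, LPath.cons e2 hpw⟩
    | inr A =>
      obtain ⟨w1, hp1, hd1⟩ := hX _ _ _ e2
      exact ⟨w1 ++ w, FlatD.cons_n hd1 hfl, lpath_append hp1 hpw⟩

theorem iterX_sound : ∀ n u A v, iterX δ q0 fin E₀ n u A v →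
    ∃ w, LPath E₀ u w v ∧ Der δ q0 fin A w := by
  intro n
  induction n with
  | zero => intro u A v h; exact h.elim
  | succ n ih =>
    intro u A v h
    rw [iterX, Function.iterate_succ_apply'] at h
    obtain ⟨qf, α, hf, hp⟩ := h
    obtain ⟨hδ, w, hfl, hpw⟩ := prod_sound δ q0 fin E₀ ih hp
    exact ⟨w, hpw, Der.step hf hδ hfl⟩

end Aux

section Complete

variable {Q V T Nt : Type} {δ : Q → (T ⊕ Nt) → Q → Prop} {q0 : Nt → Q}
  {fin : Nt → Q → Prop} {E₀ : V → T → V → Prop}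

theorem der_complete {A : Nt} {w : List T} (h : Der δ q0 fin A w) :
    ∀ u v : V, LPath E₀ u w v → ∃ n, iterX δ q0 fin E₀ n u A v := by
  refine Der.rec
    (motive_1 := fun A w _ => ∀ u v : V, LPath E₀ u w v →
      ∃ n, iterX δ q0 fin E₀ n u A v)
    (motive_2 := fun α w _ => ∀ u v : V, LPath E₀ u w v →
      ∃ n, ∀ p q : Q, LPath δ p α q →
        LPath (prodE δ (extendG E₀ (iterX δ q0 fin E₀ n))) (p, u) α (q, v))
    ?_ ?_ ?_ ?_ h
  · -- Der.step
    intro A qf α w hf hδ hfl ih u v hp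
    obtain ⟨n, hn⟩ := ih u v hp
    refine ⟨n + 1, ?_⟩
    rw [iterX, Function.iterate_succ_apply']
    exact ⟨qf, α, hf, hn _ _ hδ⟩
  · -- FlatD.nil
    intro u v hp
    cases hp
    refine ⟨0, fun p q hδ => ?_⟩
    cases hδ
    exact LPath.nil _
  · -- FlatD.cons_t
    intro t α' w' hfl ih u v hp
    cases hp with
    | @cons _ m _ _ _ e hp' =>
      obtain ⟨n, hn⟩ := ih m v hp'
      refine ⟨n, fun p q hδ => ?_⟩
      cases hδ with
      | @cons _ p' _ _ _ e1 hδ' =>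
        have edge : prodE δ (extendG E₀ (iterX δ q0 fin E₀ n)) (p, u)
            (Sum.inl t) (p', m) := ⟨e1, e⟩
        exact LPath.cons edge (hn _ _ hδ')
  · -- FlatD.cons_n
    intro A' α' w₁ w' hd hfl ihd ihf u v hp
    obtain ⟨m, hp1, hp2⟩ := lpath_append_inv hp
    obtain ⟨n₁, hn₁⟩ := ihd u m hp1
    obtain ⟨n₂, hn₂⟩ := ihf m v hp2
    refine ⟨max n₁ n₂, fun p q hδ => ?_⟩
    cases hδ with
    | @cons _ p' _ _ _ e1 hδ' =>
      have edge : prodE δ (extendG E₀ (iterX δ q0 fin E₀ (max n₁ n₂))) (p, u)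
          (Sum.inr A') (p', m) :=
        ⟨e1, iterX_mono δ q0 fin E₀ (le_max_left n₁ n₂) u A' m hn₁⟩
      refine LPath.cons edge (lpath_mono ?_ (hn₂ _ _ hδ'))
      rintro ⟨x1, x2⟩ l ⟨y1, y2⟩ ⟨h1, h2⟩
      refine ⟨h1, ?_⟩
      cases l with
      | inl t => exact h2
      | inr B => exact iterX_mono δ q0 fin E₀ (le_max_right n₁ n₂) _ _ _ h2

end Complete


/-- Completeness (and soundness) of the Kronecker-product CFPQ algorithm: upon
termination, the edge `(u, A, v)` has been added (i.e. `M₂^A[u,v] = 1`) iff there is a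
path `u π v` in the input graph with `A ⇒* ω(π)`. -/
theorem kron_cfpq_complete {Q V T Nt : Type}
    (δ : Q → (T ⊕ Nt) → Q → Prop) (q0 : Nt → Q) (fin : Nt → Q → Prop)
    (E₀ : V → T → V → Prop) :
    ∀ (u : V) (A : Nt) (v : V),
      (∃ n : ℕ, (stepF δ q0 fin E₀)^[n] (fun _ _ _ => False) u A v) ↔
        ∃ w : List T, LPath E₀ u w v ∧ Der δ q0 fin A w := by
  intro u A v
  constructor
  · rintro ⟨n, h⟩
    exact iterX_sound δ q0 fin E₀ n u A v h
  · rintro ⟨w, hp, hd⟩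
    exact der_complete hd u v hp
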